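/- Every nonempty admissible set of words generated by a single word w with cb(w) ≠ 0 equals W^(|cb(w)|), i.e. the set of words whose color balance is divisible by |cb(w)|. -/

import Mathlib

/-- Words on the two-letter alphabet {◦,•}: `true` = ◦ (white), `false` = • (black). -/
abbrev Word := List Bool

/-- Color balance: number of white letters minus number of black letters. -/
def cb (w : Word) : ℤ := (w.count true : ℤ) - (w.count false : ℤ)

/-- Conjugation: reverse the word and swap the colors. -/
def wconj (w : Word) : Word := (w.map (fun b => !b)).reverse

/-- Elementary cancellation: deletion of an adjacent pair ◦• or •◦. -/
def ECancel (w w' : Word) : Prop :=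
  ∃ (u v : Word) (x : Bool), w = u ++ x :: (!x) :: v ∧ w' = u ++ v

/-- Concatenation of a list of words. -/
def cat (L : List Word) : Word := L.foldr (· ++ ·) []

/-- `W^(k)`: words whose color balance is divisible by `k`. -/
def Wmod (k : ℕ) : Set Word := {w | (k : ℤ) ∣ cb w}

/-- `W^(◦,k)`: words of balance 0 all of whose prefix balances lie in `[0,k]`. -/
def Wcirc (k : ℕ) : Set Word :=
  {w | cb w = 0 ∧ ∀ l : ℕ, 0 ≤ cb (w.take l) ∧ cb (w.take l) ≤ (k : ℤ)}

/-- `W^(•,k)`: words of balance 0 all of whose prefix balances lie in `[-k,0]`. -/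
def Wbul (k : ℕ) : Set Word :=
  {w | cb w = 0 ∧ ∀ l : ℕ, -(k : ℤ) ≤ cb (w.take l) ∧ cb (w.take l) ≤ 0}

/-- `W^(◦,∞)`: words of balance 0 with all prefix balances nonnegative. -/
def WcircInf : Set Word := {w | cb w = 0 ∧ ∀ l : ℕ, 0 ≤ cb (w.take l)}

/-- `W^(•,∞)`: words of balance 0 with all prefix balances nonpositive. -/
def WbulInf : Set Word := {w | cb w = 0 ∧ ∀ l : ℕ, cb (w.take l) ≤ 0}

/-- Admissible set of words: closed under concatenation, conjugation and
elementary cancellations. -/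
def Adm (S : Set Word) : Prop :=
  (∀ w ∈ S, ∀ w' ∈ S, w ++ w' ∈ S) ∧
  (∀ w ∈ S, wconj w ∈ S) ∧
  (∀ w ∈ S, ∀ w', ECancel w w' → w' ∈ S)

/-- The admissible set generated by a set of words. -/
def genA (A : Set Word) : Set Word := ⋂₀ {S | Adm S ∧ A ⊆ S}

/-!
Elementary cancellations preserve `cb`, and every word cancels down to a constant word `x^n` with
`n = |cb|`. Hence `W^(k)` is an admissible set containing `w`, and `◦^k ∈ genA {w}` for
`k = |cb w|`. Conversely, `T = genA {◦^k}` is closed under wrapping `c ↦ x c x̄` (`x̄ = !x`): the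
words all of whose wrappings lie in `T` form an admissible set, which contains `◦^k` because
`◦•` and `•◦` lie in `T`. Iterated wrapping puts `conj(b) c b` in `T` for `c ∈ T`, and
`a b · conj(b) x x̄ b` cancels to `a x x̄ b`, so `T` is also closed under inserting `x x̄`. Thus `T`
is closed under reduction in both directions, and a word of balance `±qk` lies in `T` because it
reduces to `x^(qk) ∈ T`.
-/

open List

abbrev Reduces : Word → Word → Prop := Relation.ReflTransGen ECancel

@[simp] lemma cb_nil : cb [] = 0 := rfl

@[simp] lemma cb_cons (x : Bool) (u : Word) : cb (x :: u) = (if x then 1 else -1) + cb u := by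
  cases x <;> simp [cb] <;> ring

@[simp] lemma cb_append (u v : Word) : cb (u ++ v) = cb u + cb v := by
  simp only [cb, count_append]; push_cast; ring

@[simp] lemma cb_replicate (n : ℕ) (x : Bool) :
    cb (replicate n x) = if x then (n : ℤ) else -(n : ℤ) := by
  cases x <;> simp [cb, count_replicate]

lemma natAbs_cb_replicate (n : ℕ) (x : Bool) : (cb (replicate n x)).natAbs = n := by
  cases x <;> simp

@[simp] lemma wconj_nil : wconj [] = [] := rfl

@[simp] lemma wconj_append (u v : Word) : wconj (u ++ v) = wconj v ++ wconj u := by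
  simp [wconj]

@[simp] lemma wconj_cons (x : Bool) (u : Word) : wconj (x :: u) = wconj u ++ [!x] := by
  simp [wconj]

lemma wconj_replicate (n : ℕ) (x : Bool) : wconj (replicate n x) = replicate n (!x) := by
  simp [wconj]

@[simp] lemma cb_wconj (u : Word) : cb (wconj u) = -cb u := by
  induction u with
  | nil => rfl
  | cons x u ih => cases x <;> simp [ih]

lemma ECancel.append_append {u v : Word} (h : ECancel u v) (a b : Word) :
    ECancel (a ++ u ++ b) (a ++ v ++ b) := by
  obtain ⟨p, q, x, rfl, rfl⟩ := h
  exact ⟨a ++ p, q ++ b, x, by simp, by simp⟩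

lemma ECancel.cb_eq {u v : Word} (h : ECancel u v) : cb u = cb v := by
  obtain ⟨p, q, x, rfl, rfl⟩ := h
  cases x <;> simp

lemma Reduces.append_append {u v : Word} (h : Reduces u v) (a b : Word) :
    Reduces (a ++ u ++ b) (a ++ v ++ b) :=
  h.lift _ fun _ _ h' => h'.append_append a b

lemma Reduces.cb_eq {u v : Word} (h : Reduces u v) : cb u = cb v := by
  induction h with
  | refl => rfl
  | tail _ h ih => exact ih.trans h.cb_eq

lemma exists_reduces_replicate (u : Word) : ∃ n x, Reduces u (replicate n x) := by
  induction u with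
  | nil => exact ⟨0, true, .refl⟩
  | cons y u ih =>
    obtain ⟨n, x, hu⟩ := ih
    have hyu : Reduces (y :: u) (y :: replicate n x) := by simpa using hu.append_append [y] []
    rcases Bool.eq_or_eq_not y x with rfl | rfl
    · exact ⟨n + 1, y, hyu⟩
    · cases n with
      | zero => exact ⟨1, !x, hyu⟩
      | succ n => exact ⟨n, x, hyu.tail ⟨[], replicate n x, !x, by simp [replicate_succ], rfl⟩⟩

lemma exists_reduces_replicate_natAbs_cb (u : Word) :
    ∃ x, Reduces u (replicate (cb u).natAbs x) := by
  obtain ⟨n, x, h⟩ := exists_reduces_replicate u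
  exact ⟨x, by rwa [h.cb_eq, natAbs_cb_replicate]⟩

lemma reduces_nil_of_cb_eq_zero {u : Word} (h : cb u = 0) : Reduces u [] := by
  simpa [h] using exists_reduces_replicate_natAbs_cb u

def WrapClosed (S : Set Word) : Prop := ∀ c ∈ S, ∀ x, [x] ++ c ++ [!x] ∈ S

lemma WrapClosed.wconj_append_append_mem {S : Set Word} (hS : WrapClosed S) {c : Word}
    (hc : c ∈ S) (b : Word) : wconj b ++ c ++ b ∈ S := by
  induction b generalizing c with
  | nil => simpa using hc
  | cons y b ih => simpa using ih (hS c hc (!y))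

namespace Adm

variable {S : Set Word}

lemma mem_of_reduces (hS : Adm S) {u v : Word} (hu : u ∈ S) (h : Reduces u v) : v ∈ S := by
  induction h with
  | refl => exact hu
  | tail _ h ih => exact hS.2.2 _ ih _ h

lemma nil_mem (hS : Adm S) {u : Word} (hu : u ∈ S) : [] ∈ S :=
  hS.mem_of_reduces (hS.1 _ hu _ (hS.2.1 _ hu)) (reduces_nil_of_cb_eq_zero (by simp))

lemma replicate_mul_mem (hS : Adm S) {k : ℕ} {x : Bool} (h : replicate k x ∈ S) (q : ℕ) :
    replicate (k * q) x ∈ S := by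
  induction q with
  | zero => exact hS.nil_mem h
  | succ q ih => rw [Nat.mul_succ, replicate_add]; exact hS.1 _ ih _ h

lemma wrap (hS : Adm S) : Adm {c | ∀ x, [x] ++ c ++ [!x] ∈ S} := by
  refine ⟨fun u hu v hv x => ?_, fun u hu x => ?_, fun u hu v h x => ?_⟩
  · exact hS.2.2 _ (hS.1 _ (hu x) _ (hv x)) _ ⟨[x] ++ u, v ++ [!x], !x, by simp, by simp⟩
  · simpa using hS.2.1 _ (hu x)
  · exact hS.2.2 _ (hu x) _ (h.append_append _ _)

lemma mem_of_eCancel (hS : Adm S) (hwrap : WrapClosed S) {u v : Word} (hv : v ∈ S)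
    (h : ECancel u v) : u ∈ S := by
  obtain ⟨a, b, x, rfl, rfl⟩ := h
  have hpair : [x, !x] ∈ S := by simpa using hwrap _ (hS.nil_mem hv) x
  have hcat := hS.1 _ hv _ (hwrap.wconj_append_append_mem hpair b)
  have hred : Reduces (a ++ (b ++ wconj b) ++ ([x, !x] ++ b)) (a ++ [] ++ ([x, !x] ++ b)) :=
    (reduces_nil_of_cb_eq_zero (by simp)).append_append _ _
  simpa using hS.mem_of_reduces (by simpa using hcat) hred

lemma mem_of_reduces_of_mem (hS : Adm S) (hwrap : WrapClosed S) {u v : Word} (h : Reduces u v)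
    (hv : v ∈ S) : u ∈ S := by
  induction h with
  | refl => exact hv
  | tail _ h ih => exact ih (hS.mem_of_eCancel hwrap hv h)

end Adm

lemma adm_genA (A : Set Word) : Adm (genA A) :=
  ⟨fun u hu v hv S hS => hS.1.1 u (hu S hS) v (hv S hS),
    fun u hu S hS => hS.1.2.1 u (hu S hS),
    fun u hu v h S hS => hS.1.2.2 u (hu S hS) v h⟩

lemma subset_genA (A : Set Word) : A ⊆ genA A :=
  fun _ hu _ hS => hS.2 hu

lemma genA_subset {A S : Set Word} (hS : Adm S) (hA : A ⊆ S) : genA A ⊆ S :=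
  Set.sInter_subset_of_mem ⟨hS, hA⟩

lemma adm_Wmod (k : ℕ) : Adm (Wmod k) := by
  refine ⟨fun u hu v hv => ?_, fun u hu => ?_, fun u hu v h => ?_⟩
  · simpa [Wmod] using dvd_add hu hv
  · simpa [Wmod] using hu
  · simpa [Wmod, h.cb_eq] using hu

lemma replicate_natAbs_cb_mem_genA (w : Word) : replicate (cb w).natAbs true ∈ genA {w} := by
  have hw := subset_genA {w} rfl
  obtain ⟨x, h⟩ := exists_reduces_replicate_natAbs_cb w
  have hx := (adm_genA _).mem_of_reduces hw h
  cases x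
  · simpa [wconj_replicate] using (adm_genA _).2.1 _ hx
  · exact hx

lemma replicate_mem_genA_replicate (k : ℕ) (x : Bool) :
    replicate k x ∈ genA {replicate k true} := by
  have h := subset_genA {replicate k true} rfl
  cases x
  · simpa [wconj_replicate] using (adm_genA _).2.1 _ h
  · exact h

lemma pair_mem_genA_replicate {k : ℕ} (hk : 0 < k) (x : Bool) :
    [x, !x] ∈ genA {replicate k true} := by
  obtain ⟨m, rfl⟩ := Nat.exists_eq_add_one_of_ne_zero hk.ne'
  have hblocks := (adm_genA _).1 _ (replicate_mem_genA_replicate (m + 1) x) _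
    (replicate_mem_genA_replicate (m + 1) (!x))
  have hred : Reduces ([x] ++ (replicate m x ++ replicate m (!x)) ++ [!x]) ([x] ++ [] ++ [!x]) :=
    (reduces_nil_of_cb_eq_zero (by cases x <;> simp)).append_append _ _
  have hsplit : replicate (m + 1) x ++ replicate (m + 1) (!x) =
      [x] ++ (replicate m x ++ replicate m (!x)) ++ [!x] := by
    rw [replicate_succ, replicate_succ']; simp
  rw [hsplit] at hblocks
  simpa using (adm_genA _).mem_of_reduces hblocks hred

lemma wrapClosed_genA_replicate {k : ℕ} (hk : 0 < k) : WrapClosed (genA {replicate k true}) := by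
  refine genA_subset (adm_genA _).wrap (Set.singleton_subset_iff.mpr fun x => ?_)
  have hrep := replicate_mem_genA_replicate k true
  cases x
  · show [false] ++ replicate k true ++ [true] ∈ _
    rw [append_assoc, ← replicate_succ', replicate_succ]
    exact (adm_genA _).1 _ (pair_mem_genA_replicate hk false) _ hrep
  · rw [singleton_append, ← replicate_succ, replicate_succ', append_assoc]
    exact (adm_genA _).1 _ hrep _ (pair_mem_genA_replicate hk true)

lemma Wmod_subset_genA_replicate {k : ℕ} (hk : 0 < k) : Wmod k ⊆ genA {replicate k true} := by
  intro z hz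
  obtain ⟨x, h⟩ := exists_reduces_replicate_natAbs_cb z
  obtain ⟨q, hq⟩ := Int.natCast_dvd.mp hz
  rw [hq] at h
  exact (adm_genA _).mem_of_reduces_of_mem (wrapClosed_genA_replicate hk) h
    ((adm_genA _).replicate_mul_mem (replicate_mem_genA_replicate k x) q)

/-- the admissible set generated by a single word `w` with
`cb w ≠ 0` is exactly the set of words whose balance is divisible by `|cb w|`. -/
theorem stmt8 (w : Word) (h : cb w ≠ 0) :
    genA {w} = Wmod (cb w).natAbs := by
  refine (genA_subset (adm_Wmod _) (by simp [Wmod])).antisymm ?_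
  calc Wmod (cb w).natAbs ⊆ genA {replicate (cb w).natAbs true} :=
        Wmod_subset_genA_replicate (Int.natAbs_pos.mpr h)
    _ ⊆ genA {w} := genA_subset (adm_genA _)
        (Set.singleton_subset_iff.mpr (replicate_natAbs_cb_mem_genA w))
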